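/- Let k(y,y') = F(‖y−y'‖) be a kernel on ℝ^q where F(x) = ∫_x^∞ f(u) du for a nonnegative continuous function f with ∫_0^∞ f = 1, and let (y_t) be a stationary process with β-mixing coefficients β(t). Then the kernel autocovariance coefficient ϱ_t = |E⟨Φ(y_t) − E Φ(y_t), Φ(y_0) − E Φ(y_0)⟩_H| satisfies ϱ_t ≤ β(t), where Φ is the canonical feature map into the RKHS H of k. -/

import Mathlib

/-!
Since `f ≥ 0` has total mass one, `F` is antitone on `[0, ∞)` with values in `[0, 1]`, so
`(x, y) ↦ k x y` is a measurable `[0, 1]`-valued function. By the layer-cake formula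
`∫ g dP = ∫₀¹ P {g ≥ t} dt`, the difference of the two integrals is an average over `t ∈ (0, 1]`
of differences of the measures of the superlevel sets `{g ≥ t}`, each of which is at most `β`.
-/

open MeasureTheory Set

theorem integrableOn_measureReal_setOf_le {X : Type*} [MeasurableSpace X]
    (ν : Measure X) [IsFiniteMeasure ν] (g : X → ℝ) {s : Set ℝ} (hs : volume s ≠ ⊤) :
    IntegrableOn (fun t => ν.real {x | t ≤ g x}) s := by
  have hanti : Antitone fun t => ν.real {x | t ≤ g x} := fun _ _ hst =>
    measureReal_mono (fun _ hx => hst.trans hx)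
  have : IsFiniteMeasure (volume.restrict s) := isFiniteMeasure_restrict.mpr hs
  exact .of_mem_Icc 0 (ν.real univ) hanti.measurable.aemeasurable
    (.of_forall fun _ => ⟨measureReal_nonneg, measureReal_mono (subset_univ _)⟩)

theorem abs_integral_sub_integral_le_of_abs_measureReal_sub_le {X : Type*} [MeasurableSpace X]
    {P Q : Measure X} [IsFiniteMeasure P] [IsFiniteMeasure Q] {g : X → ℝ} (hg : Measurable g)
    (hg0 : 0 ≤ g) (hg1 : g ≤ 1) {β : ℝ}
    (hβ : ∀ B, MeasurableSet B → |P.real B - Q.real B| ≤ β) :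
    |∫ x, g x ∂P - ∫ x, g x ∂Q| ≤ β := by
  have hlayer (ν : Measure X) [IsFiniteMeasure ν] :
      (∫ x, g x ∂ν) = ∫ t in Ioc 0 1, ν.real {x | t ≤ g x} :=
    Integrable.integral_eq_integral_Ioc_meas_le
      (.of_mem_Icc 0 1 hg.aemeasurable (.of_forall fun x => ⟨hg0 x, hg1 x⟩))
      (.of_forall hg0) (.of_forall hg1)
  have hvol : volume (Ioc (0 : ℝ) 1) ≠ ⊤ := by simp
  rw [hlayer P, hlayer Q, ← integral_sub (integrableOn_measureReal_setOf_le P g hvol)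
    (integrableOn_measureReal_setOf_le Q g hvol)]
  calc ‖∫ t in Ioc 0 1, (P.real {x | t ≤ g x} - Q.real {x | t ≤ g x})‖
      ≤ β * volume.real (Ioc (0 : ℝ) 1) :=
        norm_setIntegral_le_of_norm_le_const hvol.lt_top fun _ _ => hβ _ (hg measurableSet_Ici)
    _ = β := by simp

theorem antitoneOn_setIntegral_Ioi {f : ℝ → ℝ} {a : ℝ} (hf : IntegrableOn f (Ioi a))
    (hf0 : ∀ u, 0 ≤ f u) : AntitoneOn (fun x => ∫ u in Ioi x, f u) (Ici a) :=
  fun _ hx _ _ hxy => setIntegral_mono_set (hf.mono_set (Ioi_subset_Ioi hx))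
    (.of_forall hf0) (.of_forall (Ioi_subset_Ioi hxy))

theorem AntitoneOn.measurable_comp_of_nonneg {F : ℝ → ℝ} (hF : AntitoneOn F (Ici 0))
    {X : Type*} [MeasurableSpace X] {d : X → ℝ} (hd : Measurable d) (hd0 : ∀ x, 0 ≤ d x) :
    Measurable fun x => F (d x) := by
  have hmax : Antitone fun x => F (max x 0) := fun x y hxy =>
    hF (le_max_right x 0) (le_max_right y 0) (max_le_max_right 0 hxy)
  simpa only [Function.comp_def, max_eq_left (hd0 _)] using hmax.measurable.comp hd

theorem stmt_2_general {q : ℕ} {Ω : Type*} [MeasurableSpace Ω]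
    (μ : Measure Ω) [IsProbabilityMeasure μ]
    (y0 yt : Ω → EuclideanSpace ℝ (Fin q))
    (f : ℝ → ℝ) (hf0 : ∀ u, 0 ≤ f u)
    (hf1 : ∫ u in Set.Ioi (0 : ℝ), f u = 1)
    (F : ℝ → ℝ) (hF : ∀ x, F x = ∫ u in Set.Ioi x, f u)
    (k : EuclideanSpace ℝ (Fin q) → EuclideanSpace ℝ (Fin q) → ℝ)
    (hk : ∀ x y, k x y = F (dist x y))
    (β : ℝ)
    (hβ : ∀ B : Set (EuclideanSpace ℝ (Fin q) × EuclideanSpace ℝ (Fin q)),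
      MeasurableSet B →
      |((μ.map (fun ω => (y0 ω, yt ω))) B).toReal
        - (((μ.map y0).prod (μ.map y0)) B).toReal| ≤ β) :
    |(∫ p, k p.1 p.2 ∂(μ.map (fun ω => (y0 ω, yt ω))))
      - ∫ x, ∫ y, k x y ∂(μ.map y0) ∂(μ.map y0)| ≤ β := by
  have hFanti : AntitoneOn F (Ici 0) :=
    funext hF ▸ antitoneOn_setIntegral_Ioi (.of_integral_ne_zero (by simp [hf1])) hf0
  have hk0 (p : EuclideanSpace ℝ (Fin q) × EuclideanSpace ℝ (Fin q)) : 0 ≤ k p.1 p.2 := by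
    rw [hk, hF]
    exact setIntegral_nonneg measurableSet_Ioi fun u _ => hf0 u
  have hk1 (p : EuclideanSpace ℝ (Fin q) × EuclideanSpace ℝ (Fin q)) : k p.1 p.2 ≤ 1 := by
    rw [hk, ← hf1, ← hF]
    exact hFanti self_mem_Ici dist_nonneg dist_nonneg
  have hkm : Measurable fun p : EuclideanSpace ℝ (Fin q) × _ => k p.1 p.2 := by
    simpa only [hk] using hFanti.measurable_comp_of_nonneg
      (continuous_fst.dist continuous_snd).measurable fun _ => dist_nonneg
  have hiter : ∫ x, ∫ y, k x y ∂(μ.map y0) ∂(μ.map y0)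
      = ∫ p, k p.1 p.2 ∂((μ.map y0).prod (μ.map y0)) :=
    (integral_prod _ (.of_mem_Icc 0 1 hkm.aemeasurable
      (.of_forall fun p => ⟨hk0 p, hk1 p⟩))).symm
  rw [hiter]
  exact abs_integral_sub_integral_le_of_abs_measureReal_sub_le hkm hk0 hk1 hβ

/-- For a kernel `k(x,y) = F(‖x−y‖)` with `F(x) = ∫_x^∞ f`, `f ≥ 0` continuous,
`∫_0^∞ f = 1`, the kernel autocovariance coefficient
`ϱ_t = |∫ k dP_{0:t} − ∬ k dP_0 dP_0|` is bounded by the β-mixing coefficient `β(t)`,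
the latter being any bound on `|P_{0:t}(B) − (P_0 ⊗ P_0)(B)|` over measurable sets `B`. -/
theorem stmt_2 {q : ℕ} {Ω : Type*} [MeasurableSpace Ω]
    (μ : Measure Ω) [IsProbabilityMeasure μ]
    (y0 yt : Ω → EuclideanSpace ℝ (Fin q)) (hy0 : Measurable y0) (hyt : Measurable yt)
    (f : ℝ → ℝ) (hfc : Continuous f) (hf0 : ∀ u, 0 ≤ f u)
    (hf1 : ∫ u in Set.Ioi (0 : ℝ), f u = 1)
    (F : ℝ → ℝ) (hF : ∀ x, F x = ∫ u in Set.Ioi x, f u)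
    (k : EuclideanSpace ℝ (Fin q) → EuclideanSpace ℝ (Fin q) → ℝ)
    (hk : ∀ x y, k x y = F (dist x y))
    (hstat : μ.map yt = μ.map y0)
    (β : ℝ)
    (hβ : ∀ B : Set (EuclideanSpace ℝ (Fin q) × EuclideanSpace ℝ (Fin q)),
      MeasurableSet B →
      |((μ.map (fun ω => (y0 ω, yt ω))) B).toReal
        - (((μ.map y0).prod (μ.map y0)) B).toReal| ≤ β) :
    |(∫ p, k p.1 p.2 ∂(μ.map (fun ω => (y0 ω, yt ω))))
      - ∫ x, ∫ y, k x y ∂(μ.map y0) ∂(μ.map y0)| ≤ β :=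
  stmt_2_general μ y0 yt f hf0 hf1 F hF k hk β hβ
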